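/- arXiv:1506.06826 — 9 statements merged into one kernel-verified Lean document; each statement's English description precedes it below -/
import Mathlib

section
/- Let G and M be standard Borel spaces and ν a Borel probability measure on G. Let μ be a Borel probability measure on G^ℤ × M such that: (i) the pushforward of μ under the map π₊ : (ξ, x) ↦ (ξ(n))_{n ≥ 0} is the product measure ν^ℕ on G^ℕ; and (ii) the σ-algebra generated by π₊ is independent, with respect to μ, of the σ-algebra 𝓕 generated by the map (ξ, x) ↦ ((ξ(n))_{n < 0}, x). Let 𝓖 denote the σ-algebra generated by the map (ξ, x) ↦ ((ξ(n))_{n ≥ 0}, x). Then every measurable set A ⊆ G^ℤ × M that coincides μ-almost everywhere with a set in 𝓕 and also coincides μ-almost everywhere with a set in 𝓖 coincides μ-almost everywhere with a set of the form G^ℤ × Ã for some measurable Ã ⊆ M. -/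
/-!
Write `U` for the future coordinates, `T` for the past coordinates together with the point of
`M`, and `φ = Prod.snd`, so that `𝓕`-sets are `T`-preimages and `𝓖`-sets are preimages under
`(U, φ ∘ T)`. If `T ⁻¹' B` agrees a.e. with `(U, φ ∘ T) ⁻¹' C`, then, since `U` and `T` are
independent, the law of `(U, T)` is the product of the laws of `U` and `T`; by Fubini almost
every value `x₀` of `U` satisfies `T ⁻¹' B =ᵐ (φ ∘ T) ⁻¹' C_{x₀}`, where `C_{x₀}` is the section
of `C` at `x₀`. Thus `Ã = C_{x₀}`.
-/

open MeasureTheory ProbabilityTheory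

theorem exists_ae_eq_preimage_of_indepFun
    {Ω X Y Z : Type*} [MeasurableSpace Ω] [MeasurableSpace X] [MeasurableSpace Y]
    [MeasurableSpace Z] {μ : Measure Ω} [IsProbabilityMeasure μ] {U : Ω → X} {T : Ω → Y}
    {φ : Y → Z} (hU : Measurable U) (hT : Measurable T) (hφ : Measurable φ)
    (hUT : U ⟂ᵢ[μ] T) {B : Set Y} {C : Set (X × Z)} (hB : MeasurableSet B)
    (hC : MeasurableSet C) (hBC : T ⁻¹' B =ᵐ[μ] (fun ω => (U ω, φ (T ω))) ⁻¹' C) :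
    ∃ D : Set Z, MeasurableSet D ∧ T ⁻¹' B =ᵐ[μ] T ⁻¹' (φ ⁻¹' D) := by
  have hS : MeasurableSet {p : X × Y | p.2 ∈ B ↔ (p.1, φ p.2) ∈ C} :=
    (measurable_snd hB).iff ((measurable_fst.prodMk (hφ.comp measurable_snd)) hC)
  have h_prod : ∀ᵐ p ∂(μ.map U).prod (μ.map T), (p.2 ∈ B ↔ (p.1, φ p.2) ∈ C) := by
    rw [← hUT.map_prod_eq_prod_map_map hU.aemeasurable hT.aemeasurable,
      ae_map_iff (hU.prodMk hT).aemeasurable hS]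
    filter_upwards [hBC] with ω hω
    exact Iff.of_eq hω
  have := Measure.isProbabilityMeasure_map (μ := μ) hU.aemeasurable
  obtain ⟨x₀, hx₀⟩ := (Measure.ae_ae_of_ae_prod h_prod).exists
  refine ⟨{z | (x₀, z) ∈ C}, measurable_prodMk_left hC, ?_⟩
  filter_upwards [ae_of_ae_map hT.aemeasurable hx₀] with ω hω
  exact propext hω

theorem mem_hopf_intersection_iff_product_general
    {G M : Type*} [MeasurableSpace G]
    [MeasurableSpace M]
    (μ : Measure ((ℤ → G) × M)) [IsProbabilityMeasure μ]
    (hindep : ProbabilityTheory.Indep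
      (MeasurableSpace.comap (fun p : (ℤ → G) × M => (fun n : ℕ => p.1 (n : ℤ)))
        (inferInstance : MeasurableSpace (ℕ → G)))
      (MeasurableSpace.comap
        (fun p : (ℤ → G) × M => ((fun n : ℕ => p.1 (-(n : ℤ) - 1)), p.2))
        (inferInstance : MeasurableSpace ((ℕ → G) × M))) μ)
    (A : Set ((ℤ → G) × M))
    (hAF : ∃ B : Set ((ℤ → G) × M),
      MeasurableSet[MeasurableSpace.comap
        (fun p : (ℤ → G) × M => ((fun n : ℕ => p.1 (-(n : ℤ) - 1)), p.2))
        (inferInstance : MeasurableSpace ((ℕ → G) × M))] B ∧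
      μ (symmDiff A B) = 0)
    (hAG : ∃ C : Set ((ℤ → G) × M),
      MeasurableSet[MeasurableSpace.comap
        (fun p : (ℤ → G) × M => ((fun n : ℕ => p.1 (n : ℤ)), p.2))
        (inferInstance : MeasurableSpace ((ℕ → G) × M))] C ∧
      μ (symmDiff A C) = 0) :
    ∃ Atil : Set M, MeasurableSet Atil ∧ μ (symmDiff A (Set.univ ×ˢ Atil)) = 0 := by
  obtain ⟨_, ⟨B, hB, rfl⟩, hAB⟩ := hAF
  obtain ⟨_, ⟨C, hC, rfl⟩, hAC⟩ := hAG
  rw [measure_symmDiff_eq_zero_iff] at hAB hAC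
  obtain ⟨D, hD, hBD⟩ := exists_ae_eq_preimage_of_indepFun (by fun_prop) (by fun_prop)
    measurable_snd ((IndepFun_iff_Indep _ _ _).2 hindep) hB hC (hAB.symm.trans hAC)
  refine ⟨D, hD, measure_symmDiff_eq_zero_iff.2 ?_⟩
  rw [Set.univ_prod]
  exact hAB.trans hBD

/-- Let `G`, `M` be standard Borel spaces and `ν` a Borel probability measure
on `G`.  Let `μ` be a Borel probability measure on `G^ℤ × M` such that (i) the pushforward of
`μ` under `π₊ : (ξ, x) ↦ (ξ n)_{n ≥ 0}` is the product measure `ν^ℕ` (characterized on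
cylinders), and (ii) the σ-algebra generated by `π₊` is independent of the σ-algebra `𝓕`
generated by `(ξ, x) ↦ ((ξ n)_{n < 0}, x)`.  Let `𝓖` be the σ-algebra generated by
`(ξ, x) ↦ ((ξ n)_{n ≥ 0}, x)`.  Then every measurable set `A` coinciding `μ`-a.e. with a set
in `𝓕` and `μ`-a.e. with a set in `𝓖` coincides `μ`-a.e. with `G^ℤ × Ã` for some measurable
`Ã ⊆ M`. -/
theorem mem_hopf_intersection_iff_product
    {G M : Type*} [MeasurableSpace G] [StandardBorelSpace G]
    [MeasurableSpace M] [StandardBorelSpace M]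
    (ν : Measure G) [IsProbabilityMeasure ν]
    (PN : Measure (ℕ → G)) [IsProbabilityMeasure PN]
    (hPN : ∀ (s : Finset ℕ) (C : ℕ → Set G), (∀ i, MeasurableSet (C i)) →
      PN {ω | ∀ i ∈ s, ω i ∈ C i} = ∏ i ∈ s, ν (C i))
    (μ : Measure ((ℤ → G) × M)) [IsProbabilityMeasure μ]
    (hproj : Measure.map (fun p : (ℤ → G) × M => (fun n : ℕ => p.1 (n : ℤ))) μ = PN)
    (hindep : ProbabilityTheory.Indep
      (MeasurableSpace.comap (fun p : (ℤ → G) × M => (fun n : ℕ => p.1 (n : ℤ)))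
        (inferInstance : MeasurableSpace (ℕ → G)))
      (MeasurableSpace.comap
        (fun p : (ℤ → G) × M => ((fun n : ℕ => p.1 (-(n : ℤ) - 1)), p.2))
        (inferInstance : MeasurableSpace ((ℕ → G) × M))) μ)
    (A : Set ((ℤ → G) × M)) (hA : MeasurableSet A)
    (hAF : ∃ B : Set ((ℤ → G) × M),
      MeasurableSet[MeasurableSpace.comap
        (fun p : (ℤ → G) × M => ((fun n : ℕ => p.1 (-(n : ℤ) - 1)), p.2))
        (inferInstance : MeasurableSpace ((ℕ → G) × M))] B ∧
      μ (symmDiff A B) = 0)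
    (hAG : ∃ C : Set ((ℤ → G) × M),
      MeasurableSet[MeasurableSpace.comap
        (fun p : (ℤ → G) × M => ((fun n : ℕ => p.1 (n : ℤ)), p.2))
        (inferInstance : MeasurableSpace ((ℕ → G) × M))] C ∧
      μ (symmDiff A C) = 0) :
    ∃ Atil : Set M, MeasurableSet Atil ∧ μ (symmDiff A (Set.univ ×ˢ Atil)) = 0 :=
  mem_hopf_intersection_iff_product_general μ hindep A hAF hAG
end

section
/- Let (X, μ) be a probability space and let (f_n) be a sequence of measurable functions f_n : X → ℝ with f_n > 0 μ-almost everywhere, such that each f_n is integrable with ∫ f_n dμ ≤ 1, each log ∘ f_n is integrable, and ∫ log f_n dμ → 0 as n → ∞. Then f_n converges to the constant function 1 in measure. -/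
/-!
The function `φ t = t - 1 - log t` is nonnegative on `(0, ∞)`, vanishes only at `1`, and is
bounded below by a positive constant away from `1`. Since
`∫ φ ∘ fₙ = ∫ fₙ - 1 - ∫ log fₙ ≤ -∫ log fₙ → 0`, the functions `φ ∘ fₙ` tend to `0` in `L¹`,
hence in measure, and therefore `fₙ → 1` in measure.
-/

open MeasureTheory Filter Topology

namespace Real

/-- `hat` says that `a` lies between `1` and `t`. -/
lemma sub_one_sub_log_le_of_mul_nonneg {a t : ℝ} (ha : 0 < a) (ht : 0 < t)
    (hat : 0 ≤ (t - a) * (a - 1)) : a - 1 - log a ≤ t - 1 - log t := by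
  have hlog : log t - log a ≤ (t - a) / a := by
    have := log_le_sub_one_of_pos (div_pos ht ha)
    rwa [log_div ht.ne' ha.ne', div_sub_one ha.ne'] at this
  have : (t - a) - (t - a) / a = (t - a) * (a - 1) / a := by field_simp
  linarith [div_nonneg hat ha.le]

lemma exists_pos_le_sub_one_sub_log {ε : ℝ} (hε : 0 < ε) :
    ∃ c > 0, ∀ t > 0, ε ≤ |t - 1| → c ≤ t - 1 - log t := by
  set δ := min ε (1 / 2)
  have hδ : 0 < δ := lt_min hε one_half_pos
  have hδ' : δ ≤ 1 / 2 := min_le_right _ _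
  have hpos : ∀ a > 0, a ≠ 1 → 0 < a - 1 - log a := fun a ha ha1 => by
    linarith [log_lt_sub_one_of_pos ha ha1]
  refine ⟨min (1 + δ - 1 - log (1 + δ)) (1 - δ - 1 - log (1 - δ)),
    lt_min (hpos _ (by linarith) (by linarith)) (hpos _ (by linarith) (by linarith)), ?_⟩
  intro t ht htε
  rcases le_abs.mp ((min_le_left ε _).trans htε) with h | h
  · exact (min_le_left _ _).trans
      (sub_one_sub_log_le_of_mul_nonneg (by linarith) ht (by nlinarith))
  · exact (min_le_right _ _).trans
      (sub_one_sub_log_le_of_mul_nonneg (by linarith) ht (by nlinarith))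

end Real

section

variable {α ι E F : Type*} [MeasurableSpace α] {μ : Measure α} {l : Filter ι}

lemma tendstoInMeasure_zero_of_integral_tendsto_zero {g : ι → α → ℝ}
    (hg_nonneg : ∀ i, 0 ≤ᵐ[μ] g i) (hg_int : ∀ i, Integrable (g i) μ)
    (h : Tendsto (fun i => ∫ x, g i x ∂μ) l (𝓝 0)) : TendstoInMeasure μ g l 0 := by
  refine tendstoInMeasure_of_tendsto_eLpNorm one_ne_zero
    (fun i => (hg_int i).aestronglyMeasurable) aestronglyMeasurable_const ?_
  have hnorm : ∀ i, eLpNorm (g i - 0) 1 μ = ENNReal.ofReal (∫ x, g i x ∂μ) := fun i => by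
    rw [sub_zero, eLpNorm_one_eq_lintegral_enorm, lintegral_enorm_of_ae_nonneg (hg_nonneg i),
      ofReal_integral_eq_lintegral_ofReal (hg_int i) (hg_nonneg i)]
  simpa only [hnorm, ENNReal.ofReal_zero] using ENNReal.tendsto_ofReal h

lemma TendstoInMeasure.of_forall_exists_le_dist [PseudoMetricSpace E] [PseudoMetricSpace F]
    {f : ι → α → E} {g : α → E} {f' : ι → α → F} {g' : α → F}
    (h : TendstoInMeasure μ f' l g')
    (hdist : ∀ ε > 0, ∃ δ > 0, ∀ i, ∀ᵐ x ∂μ, ε ≤ dist (f i x) (g x) → δ ≤ dist (f' i x) (g' x)) :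
    TendstoInMeasure μ f l g := by
  rw [tendstoInMeasure_iff_dist] at h ⊢
  intro ε hε
  obtain ⟨δ, hδ, hle⟩ := hdist ε hε
  exact tendsto_of_tendsto_of_tendsto_of_le_of_le tendsto_const_nhds (h δ hδ)
    (fun _ => zero_le) fun i => measure_mono_ae (hle i)

end

theorem tendstoInMeasure_one_of_integral_log_tendsto_zero_general
    {X : Type*} [MeasurableSpace X] (μ : Measure X) [IsProbabilityMeasure μ]
    (f : ℕ → X → ℝ)
    (hpos : ∀ n, ∀ᵐ x ∂μ, 0 < f n x)
    (hint : ∀ n, Integrable (f n) μ)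
    (hle : ∀ n, ∫ x, f n x ∂μ ≤ 1)
    (hlogint : ∀ n, Integrable (fun x => Real.log (f n x)) μ)
    (hlog : Filter.Tendsto (fun n => ∫ x, Real.log (f n x) ∂μ) Filter.atTop (nhds 0)) :
    TendstoInMeasure μ f Filter.atTop (fun _ => 1) := by
  set g : ℕ → X → ℝ := fun n x => f n x - 1 - Real.log (f n x)
  have hg_nonneg : ∀ n, 0 ≤ᵐ[μ] g n := fun n => by
    filter_upwards [hpos n] with x hx
    show 0 ≤ f n x - 1 - Real.log (f n x)
    linarith [Real.log_le_sub_one_of_pos hx]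
  have hg_int : ∀ n, Integrable (g n) μ := fun n =>
    ((hint n).sub (integrable_const 1)).sub (hlogint n)
  have hg_le : ∀ n, ∫ x, g n x ∂μ ≤ -∫ x, Real.log (f n x) ∂μ := fun n => by
    have hg_eq : ∫ x, g n x ∂μ = ∫ x, f n x ∂μ - 1 - ∫ x, Real.log (f n x) ∂μ := by
      rw [integral_sub (f := fun x => f n x - 1) ((hint n).sub (integrable_const 1)) (hlogint n),
        integral_sub (hint n) (integrable_const 1), integral_const, probReal_univ, one_smul]
    linarith [hle n]
  have hg_tendsto : TendstoInMeasure μ g atTop 0 :=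
    tendstoInMeasure_zero_of_integral_tendsto_zero hg_nonneg hg_int <|
      tendsto_of_tendsto_of_tendsto_of_le_of_le tendsto_const_nhds
        (by simpa using hlog.neg) (fun n => integral_nonneg_of_ae (hg_nonneg n)) hg_le
  refine TendstoInMeasure.of_forall_exists_le_dist hg_tendsto fun ε hε => ?_
  obtain ⟨c, hc, hcε⟩ := Real.exists_pos_le_sub_one_sub_log hε
  refine ⟨c, hc, fun n => ?_⟩
  filter_upwards [hpos n] with x hx hxε
  simp only [Real.dist_eq, Pi.zero_apply, sub_zero] at hxε ⊢
  exact (hcε _ hx hxε).trans (le_abs_self _)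

/-- Let `(X, μ)` be a probability space and `(f_n)` a sequence of measurable
`ℝ`-valued functions with `f_n > 0` a.e., each integrable with `∫ f_n dμ ≤ 1`, each `log ∘ f_n`
integrable, and `∫ log f_n dμ → 0`.  Then `f_n → 1` in measure. -/
theorem tendstoInMeasure_one_of_integral_log_tendsto_zero
    {X : Type*} [MeasurableSpace X] (μ : Measure X) [IsProbabilityMeasure μ]
    (f : ℕ → X → ℝ) (hmeas : ∀ n, Measurable (f n))
    (hpos : ∀ n, ∀ᵐ x ∂μ, 0 < f n x)
    (hint : ∀ n, Integrable (f n) μ)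
    (hle : ∀ n, ∫ x, f n x ∂μ ≤ 1)
    (hlogint : ∀ n, Integrable (fun x => Real.log (f n x)) μ)
    (hlog : Filter.Tendsto (fun n => ∫ x, Real.log (f n x) ∂μ) Filter.atTop (nhds 0)) :
    TendstoInMeasure μ f Filter.atTop (fun _ => 1) :=
  tendstoInMeasure_one_of_integral_log_tendsto_zero_general μ f hpos hint hle hlogint hlog
end

section
/- Let 0 < a ≤ b and let g : ℝ → ℝ satisfy a·|x − y| ≤ |g(x) − g(y)| ≤ b·|x − y| for all x, y ∈ ℝ. Then the pushforward g_*(Leb) of Lebesgue measure and Lebesgue measure itself are mutually absolutely continuous, and the Radon–Nikodym derivative d Leb / d(g_* Leb) satisfies a ≤ d Leb / d(g_* Leb) ≤ b almost everywhere. -/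
/-!
The two-sided bound makes `g` Lipschitz with constant `b` and antilipschitz with constant `a⁻¹`;
being continuous, injective and of linear growth, it is a homeomorphism of `ℝ`. Since Lebesgue
measure on `ℝ` is the one-dimensional Hausdorff measure, a `K`-Lipschitz map multiplies it by at
most `K`, which gives `a • g_* Leb ≤ Leb ≤ b • g_* Leb`. Comparing set integrals turns these
inequalities of measures into pointwise a.e. bounds on the Radon–Nikodym derivative.
-/

open MeasureTheory Filter Function
open scoped NNReal ENNReal

namespace MeasureTheory.Measure

variable {α : Type*} [MeasurableSpace α] {μ ν : Measure α}

theorem rnDeriv_le_of_le_smul [SigmaFinite ν] {c : ℝ≥0∞} (h : μ ≤ c • ν) :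
    μ.rnDeriv ν ≤ᵐ[ν] fun _ ↦ c := by
  refine ae_le_of_forall_setLIntegral_le_of_sigmaFinite (μ.measurable_rnDeriv ν) fun s _ _ ↦ ?_
  rw [setLIntegral_const, ← smul_eq_mul, ← smul_apply]
  exact (setLIntegral_rnDeriv_le s).trans (h s)

theorem le_rnDeriv_of_smul_le [HaveLebesgueDecomposition μ ν] [SigmaFinite ν] (hμν : μ ≪ ν)
    {c : ℝ≥0∞} (h : c • ν ≤ μ) : (fun _ ↦ c) ≤ᵐ[ν] μ.rnDeriv ν := by
  refine ae_le_of_forall_setLIntegral_le_of_sigmaFinite measurable_const fun s hs _ ↦ ?_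
  rw [setLIntegral_const, setLIntegral_rnDeriv' hμν hs, ← smul_eq_mul, ← smul_apply]
  exact h s

end MeasureTheory.Measure

namespace LipschitzWith

variable {K : ℝ≥0} {f : ℝ → ℝ}

theorem volume_image_le (hf : LipschitzWith K f) (s : Set ℝ) :
    volume (f '' s) ≤ K * volume s := by
  simpa only [hausdorffMeasure_real, ENNReal.rpow_one] using
    hf.hausdorffMeasure_image_le zero_le_one s

theorem volume_le_smul_map_volume (hf : LipschitzWith K f) (hsurj : Surjective f) :
    volume ≤ K • Measure.map f volume := by
  refine Measure.le_iff.2 fun s hs ↦ ?_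
  rw [Measure.smul_apply, Measure.map_apply hf.continuous.measurable hs, ENNReal.smul_def,
    smul_eq_mul]
  calc volume s = volume (f '' (f ⁻¹' s)) := by rw [Set.image_preimage_eq s hsurj]
    _ ≤ K * volume (f ⁻¹' s) := hf.volume_image_le _

end LipschitzWith

namespace AntilipschitzWith

variable {K : ℝ≥0} {f : ℝ → ℝ}

theorem volume_preimage_le (hf : AntilipschitzWith K f) (s : Set ℝ) :
    volume (f ⁻¹' s) ≤ K * volume s := by
  simpa only [hausdorffMeasure_real, ENNReal.rpow_one] using
    hf.hausdorffMeasure_preimage_le zero_le_one s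

theorem map_volume_le_smul (hf : AntilipschitzWith K f) (hmeas : Measurable f) :
    Measure.map f volume ≤ K • volume := by
  refine Measure.le_iff.2 fun s hs ↦ ?_
  rw [Measure.smul_apply, Measure.map_apply hmeas hs, ENNReal.smul_def, smul_eq_mul]
  exact hf.volume_preimage_le s

theorem surjective_of_strictMono (hf : AntilipschitzWith K f) (hmono : StrictMono f)
    (hcont : Continuous f) : Surjective f := by
  have hK : 0 < (K : ℝ) := by
    refine NNReal.coe_pos.2 (pos_iff_ne_zero.2 ?_)
    rintro rfl
    have := hf.subsingleton
    exact zero_ne_one (Subsingleton.elim (0 : ℝ) 1)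
  have hgrowth : ∀ x y, y ≤ x → (x - y) / K ≤ f x - f y := fun x y hyx ↦ by
    have := hf.le_mul_dist x y
    rw [Real.dist_eq, Real.dist_eq, abs_of_nonneg (sub_nonneg.2 hyx),
      abs_of_nonneg (sub_nonneg.2 (hmono.monotone hyx))] at this
    rwa [div_le_iff₀' hK]
  refine hcont.surjective ?_ ?_
  · refine tendsto_atTop_mono' _ (eventually_ge_atTop 0 |>.mono fun x hx ↦ ?_)
      (tendsto_atTop_add_const_left _ (f 0) (tendsto_id.atTop_div_const hK))
    simp only [id_eq]
    have := hgrowth x 0 hx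
    rw [sub_zero] at this
    linarith
  · refine tendsto_atBot_mono' _ (eventually_le_atBot 0 |>.mono fun x hx ↦ ?_)
      (tendsto_atBot_add_const_left _ (f 0) (tendsto_id.atBot_div_const hK))
    have := hgrowth 0 x hx
    rw [zero_sub, neg_div] at this
    simp only [id_eq]
    linarith

theorem surjective_of_continuous (hf : AntilipschitzWith K f) (hcont : Continuous f) :
    Surjective f := by
  rcases hcont.strictMono_of_inj hf.injective with hmono | hanti
  · exact hf.surjective_of_strictMono hmono hcont
  · have hneg : AntilipschitzWith K (-f) := .of_le_mul_dist fun x y ↦ by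
      simpa only [Pi.neg_apply, dist_neg_neg] using hf.le_mul_dist x y
    intro y
    obtain ⟨x, hx⟩ := hneg.surjective_of_strictMono hanti.neg hcont.neg (-y)
    exact ⟨x, neg_injective hx⟩

end AntilipschitzWith

theorem rnDeriv_of_biLipschitz_bounds_general
    (a b : ℝ) (ha : 0 < a) (g : ℝ → ℝ)
    (hg : ∀ x y : ℝ, a * |x - y| ≤ |g x - g y| ∧ |g x - g y| ≤ b * |x - y|) :
    (volume : Measure ℝ) ≪ Measure.map g volume ∧
    Measure.map g volume ≪ (volume : Measure ℝ) ∧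
    ∀ᵐ x ∂(volume : Measure ℝ),
      ENNReal.ofReal a ≤ Measure.rnDeriv (volume : Measure ℝ) (Measure.map g volume) x ∧
      Measure.rnDeriv (volume : Measure ℝ) (Measure.map g volume) x ≤ ENNReal.ofReal b := by
  have hlip : LipschitzWith b.toNNReal g := .of_dist_le_mul fun x y ↦ by
    simpa only [Real.dist_eq] using (hg x y).2.trans
      (mul_le_mul_of_nonneg_right (Real.le_coe_toNNReal b) (abs_nonneg _))
  have hanti : AntilipschitzWith a.toNNReal⁻¹ g := .of_le_mul_dist fun x y ↦ by
    rw [Real.dist_eq, Real.dist_eq, NNReal.coe_inv, Real.coe_toNNReal a ha.le, inv_mul_eq_div,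
      le_div_iff₀' ha]
    exact (hg x y).1
  set ν := Measure.map g volume
  have hvolume_le : volume ≤ b.toNNReal • ν :=
    hlip.volume_le_smul_map_volume (hanti.surjective_of_continuous hlip.continuous)
  have hmap_le : ν ≤ a.toNNReal⁻¹ • volume :=
    hanti.map_volume_le_smul hlip.continuous.measurable
  have hsmul_map_le : a.toNNReal • ν ≤ volume :=
    calc a.toNNReal • ν ≤ a.toNNReal • a.toNNReal⁻¹ • volume := by gcongr
      _ = volume := by rw [smul_smul, mul_inv_cancel₀ (by simpa using ha), one_smul]
  have : SigmaFinite ν := Measure.sigmaFinite_of_le _ hmap_le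
  have hac : volume ≪ ν := Measure.absolutelyContinuous_of_le_smul hvolume_le
  refine ⟨hac, Measure.absolutelyContinuous_of_le_smul hmap_le, hac.ae_le ?_⟩
  filter_upwards [Measure.le_rnDeriv_of_smul_le hac hsmul_map_le,
    Measure.rnDeriv_le_of_le_smul hvolume_le] with x hlow hup
  exact ⟨hlow, hup⟩

/-- Let `0 < a ≤ b` and let `g : ℝ → ℝ` satisfy
`a * |x − y| ≤ |g x − g y| ≤ b * |x − y|` for all `x, y`.  Then the pushforward `g_* Leb` of
Lebesgue measure and Lebesgue measure are mutually absolutely continuous, and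
`a ≤ d Leb / d (g_* Leb) ≤ b` almost everywhere. -/
theorem rnDeriv_of_biLipschitz_bounds
    (a b : ℝ) (ha : 0 < a) (hab : a ≤ b) (g : ℝ → ℝ)
    (hg : ∀ x y : ℝ, a * |x - y| ≤ |g x - g y| ∧ |g x - g y| ≤ b * |x - y|) :
    (volume : Measure ℝ) ≪ Measure.map g volume ∧
    Measure.map g volume ≪ (volume : Measure ℝ) ∧
    ∀ᵐ x ∂(volume : Measure ℝ),
      ENNReal.ofReal a ≤ Measure.rnDeriv (volume : Measure ℝ) (Measure.map g volume) x ∧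
      Measure.rnDeriv (volume : Measure ℝ) (Measure.map g volume) x ≤ ENNReal.ofReal b :=
  rnDeriv_of_biLipschitz_bounds_general a b ha g hg
end

section
/- Let λ^s < 0 < λ^u and let ε > 0 satisfy 3ε < −λ^s and ε < λ^u. Let a, b : ℝ → ℝ satisfy, for all m ∈ ℝ and all ℓ ≥ 0: (λ^u − ε)ℓ ≤ a(m + ℓ) − a(m) ≤ (λ^u + ε)ℓ and (λ^s − ε)ℓ ≤ b(m + ℓ) − b(m) ≤ (λ^s + ε)ℓ. Fix c ∈ ℝ and define τ(m) = sup { ℓ ∈ ℝ : b(m) + a(m + ℓ) − a(m) ≤ c } and L(m) = m + τ(m). Then τ(m) is a well-defined real number for every m, and for all m ∈ ℝ and ℓ ≥ 0: ((−λ^s − 3ε)/(λ^u + ε))·ℓ ≤ τ(m + ℓ) − τ(m) ≤ ((−λ^s + 3ε)/(λ^u − ε))·ℓ, and ((λ^u − λ^s − 2ε)/(λ^u + ε))·ℓ ≤ L(m + ℓ) − L(m) ≤ ((λ^u − λ^s + 2ε)/(λ^u − ε))·ℓ. In particular τ and L are bi-Lipschitz increasing homeomorphisms of ℝ. -/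
/-!
Put `φₘ(ℓ) = b(m) + a(m + ℓ) - a(m)`. Since `a` grows at rate at least `λᵘ - ε > 0`, `φₘ` is
continuous and tends to `±∞`, so the supremum `τ(m)` of its sublevel set `{φₘ ≤ c}` exists and
solves `φₘ(τ(m)) = c`, that is `a(L(m)) = a(m) - b(m) + c`. Thus `a ∘ L` has the increments of
`a - b`, which lie between `(λᵘ - λˢ ∓ 2ε)ℓ`; dividing by the growth rates `λᵘ ± ε` of `a` bounds
the increments of `L`, and those of `τ = L - id` are the same bounds minus `ℓ`.
-/

open Filter Topology

def IncrementBounds (α β : ℝ) (f : ℝ → ℝ) : Prop :=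
  ∀ m ℓ : ℝ, 0 ≤ ℓ → α * ℓ ≤ f (m + ℓ) - f m ∧ f (m + ℓ) - f m ≤ β * ℓ

theorem incrementBounds_id : IncrementBounds 1 1 id := fun m ℓ _ => by simp

namespace IncrementBounds

variable {α β γ δ : ℝ} {f g : ℝ → ℝ}

theorem bounds_of_le (hf : IncrementBounds α β f) {x y : ℝ} (hxy : x ≤ y) :
    α * (y - x) ≤ f y - f x ∧ f y - f x ≤ β * (y - x) := by
  simpa using hf x (y - x) (sub_nonneg.2 hxy)

theorem le (hf : IncrementBounds α β f) : α ≤ β := by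
  obtain ⟨h₁, h₂⟩ := hf 0 1 zero_le_one
  linarith

theorem sub (hf : IncrementBounds α β f) (hg : IncrementBounds γ δ g) :
    IncrementBounds (α - δ) (β - γ) (f - g) := fun m ℓ hℓ => by
  obtain ⟨h₁, h₂⟩ := hf m ℓ hℓ
  obtain ⟨k₁, k₂⟩ := hg m ℓ hℓ
  simp only [Pi.sub_apply]
  constructor <;> linarith

theorem add_const (hf : IncrementBounds α β f) (d : ℝ) :
    IncrementBounds α β (fun x => f x + d) := fun m ℓ hℓ => by
  simpa using hf m ℓ hℓ

theorem comp_const_add (hf : IncrementBounds α β f) (m : ℝ) :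
    IncrementBounds α β (fun x => f (m + x)) := fun x ℓ hℓ => by
  simpa [add_assoc] using hf (m + x) ℓ hℓ

theorem strictMono (hf : IncrementBounds α β f) (hα : 0 < α) : StrictMono f := fun x y hxy => by
  have := mul_pos hα (sub_pos.2 hxy)
  linarith [(hf.bounds_of_le hxy.le).1]

theorem lipschitzWith (hf : IncrementBounds α β f) (hα : 0 ≤ α) :
    LipschitzWith (Real.toNNReal β) f := by
  refine LipschitzWith.of_dist_le_mul fun x y => ?_
  rw [Real.dist_eq, Real.dist_eq, Real.coe_toNNReal _ (hα.trans hf.le)]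
  wlog hxy : y ≤ x generalizing x y
  · rw [abs_sub_comm, abs_sub_comm x]
    exact this y x (le_of_not_ge hxy)
  obtain ⟨h₁, h₂⟩ := hf.bounds_of_le hxy
  have := mul_nonneg hα (sub_nonneg.2 hxy)
  rwa [abs_of_nonneg (by linarith), abs_of_nonneg (sub_nonneg.2 hxy)]

theorem continuous (hf : IncrementBounds α β f) (hα : 0 ≤ α) : Continuous f :=
  (hf.lipschitzWith hα).continuous

theorem tendsto_atTop (hf : IncrementBounds α β f) (hα : 0 < α) : Tendsto f atTop atTop := by
  refine tendsto_atTop_mono' _ ?_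
    (tendsto_atTop_add_const_left _ (f 0) (tendsto_id.const_mul_atTop hα))
  filter_upwards [eventually_ge_atTop 0] with x hx
  rw [id]
  linarith [(hf.bounds_of_le hx).1]

theorem tendsto_atBot (hf : IncrementBounds α β f) (hα : 0 < α) : Tendsto f atBot atBot := by
  refine tendsto_atBot_mono' _ ?_
    (tendsto_atBot_add_const_left _ (f 0) (tendsto_id.const_mul_atBot hα))
  filter_upwards [eventually_le_atBot 0] with x hx
  rw [id]
  linarith [(hf.bounds_of_le hx).1]

theorem surjective (hf : IncrementBounds α β f) (hα : 0 < α) : Function.Surjective f :=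
  (hf.continuous hα.le).surjective (hf.tendsto_atTop hα) (hf.tendsto_atBot hα)

theorem of_comp (hf : IncrementBounds α β f) (hα : 0 < α) (hfg : IncrementBounds γ δ (f ∘ g))
    (hγ : 0 ≤ γ) : IncrementBounds (γ / β) (δ / α) g := fun m ℓ hℓ => by
  obtain ⟨h₁, h₂⟩ := hfg m ℓ hℓ
  simp only [Function.comp_apply] at h₁ h₂
  have hg : g m ≤ g (m + ℓ) :=
    (hf.strictMono hα).le_iff_le.1 (by linarith [mul_nonneg hγ hℓ])
  obtain ⟨k₁, k₂⟩ := hf.bounds_of_le hg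
  constructor
  · rw [div_mul_eq_mul_div, div_le_iff₀ (hα.trans_le hf.le)]
    linarith
  · rw [div_mul_eq_mul_div, le_div_iff₀ hα]
    linarith

end IncrementBounds

theorem apply_csSup_sublevel_eq {X Y : Type*} [ConditionallyCompleteLinearOrder X]
    [TopologicalSpace X] [OrderTopology X] [DenselyOrdered X] [NoMaxOrder X] [LinearOrder Y]
    [TopologicalSpace Y] [OrderTopology Y] {f : X → Y} (hf : Continuous f) {c : Y}
    (hne : {x | f x ≤ c}.Nonempty) (hbdd : BddAbove {x | f x ≤ c}) :
    f (sSup {x | f x ≤ c}) = c := by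
  set s := sSup {x | f x ≤ c}
  refine ((isClosed_le hf continuous_const).csSup_mem hne hbdd).antisymm (not_lt.1 fun hlt => ?_)
  obtain ⟨x, hxc, hsx⟩ := ((hf.continuousAt.eventually (gt_mem_nhds hlt)).filter_mono
    nhdsWithin_le_nhds |>.and (self_mem_nhdsWithin (s := Set.Ioi s))).exists
  exact (le_csSup hbdd hxc.le).not_gt hsx

theorem nonempty_sublevel_of_tendsto_atBot {X Y : Type*} [Preorder X] [Nonempty X]
    [IsDirected X (· ≥ ·)] [Preorder Y] {f : X → Y} (hf : Tendsto f atBot atBot) (c : Y) :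
    {x | f x ≤ c}.Nonempty :=
  (hf.eventually (eventually_le_atBot c)).exists

theorem bddAbove_sublevel_of_tendsto_atTop {X Y : Type*} [LinearOrder X] [Nonempty X]
    [Preorder Y] [NoMaxOrder Y] {f : X → Y} (hf : Tendsto f atTop atTop) (c : Y) :
    BddAbove {x | f x ≤ c} := by
  obtain ⟨N, hN⟩ := eventually_atTop.1 (hf.eventually_gt_atTop c)
  exact ⟨N, fun x hx => not_lt.1 fun hNx => (hN x hNx.le).not_ge hx⟩

theorem stopping_time_biLipschitz_general
    (ls lu ε : ℝ) (hε : 0 < ε)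
    (hε1 : 3 * ε < -ls) (hε2 : ε < lu)
    (a b : ℝ → ℝ)
    (ha : ∀ m ℓ : ℝ, 0 ≤ ℓ →
      (lu - ε) * ℓ ≤ a (m + ℓ) - a m ∧ a (m + ℓ) - a m ≤ (lu + ε) * ℓ)
    (hb : ∀ m ℓ : ℝ, 0 ≤ ℓ →
      (ls - ε) * ℓ ≤ b (m + ℓ) - b m ∧ b (m + ℓ) - b m ≤ (ls + ε) * ℓ)
    (c : ℝ) (τ L : ℝ → ℝ)
    (hτ : ∀ m, τ m = sSup {ℓ : ℝ | b m + (a (m + ℓ) - a m) ≤ c})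
    (hL : ∀ m, L m = m + τ m) :
    (∀ m : ℝ, {ℓ : ℝ | b m + (a (m + ℓ) - a m) ≤ c}.Nonempty ∧
      BddAbove {ℓ : ℝ | b m + (a (m + ℓ) - a m) ≤ c}) ∧
    (∀ m ℓ : ℝ, 0 ≤ ℓ →
      ((-ls - 3 * ε) / (lu + ε)) * ℓ ≤ τ (m + ℓ) - τ m ∧
      τ (m + ℓ) - τ m ≤ ((-ls + 3 * ε) / (lu - ε)) * ℓ ∧
      ((lu - ls - 2 * ε) / (lu + ε)) * ℓ ≤ L (m + ℓ) - L m ∧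
      L (m + ℓ) - L m ≤ ((lu - ls + 2 * ε) / (lu - ε)) * ℓ) ∧
    StrictMono τ ∧ Function.Surjective τ ∧ Continuous τ ∧
    StrictMono L ∧ Function.Surjective L ∧ Continuous L := by
  have ha' : IncrementBounds (lu - ε) (lu + ε) a := ha
  have hb' : IncrementBounds (ls - ε) (ls + ε) b := hb
  have hα : 0 < lu - ε := by linarith
  have hcocycle (m : ℝ) :
      IncrementBounds (lu - ε) (lu + ε) fun ℓ => b m + (a (m + ℓ) - a m) := by
    convert (ha'.comp_const_add m).add_const (b m - a m) using 2
    ring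
  have hS (m : ℝ) := And.intro
    (nonempty_sublevel_of_tendsto_atBot ((hcocycle m).tendsto_atBot hα) c)
    (bddAbove_sublevel_of_tendsto_atTop ((hcocycle m).tendsto_atTop hα) c)
  have hhit (m : ℝ) : a (L m) = a m - b m + c := by
    have := apply_csSup_sublevel_eq ((hcocycle m).continuous hα.le) (hS m).1 (hS m).2
    rw [← hτ, ← hL] at this
    linarith
  have hLb : IncrementBounds ((lu - ls - 2 * ε) / (lu + ε)) ((lu - ls + 2 * ε) / (lu - ε)) L := by
    refine ha'.of_comp hα ?_ (by linarith)
    convert (ha'.sub hb').add_const c using 1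
    · ring
    · ring
    · exact funext hhit
  have hτb : IncrementBounds ((-ls - 3 * ε) / (lu + ε)) ((-ls + 3 * ε) / (lu - ε)) τ := by
    have hβ : lu + ε ≠ 0 := by linarith
    convert hLb.sub incrementBounds_id using 1
    · field_simp
      ring
    · field_simp
      ring
    · funext m
      simp [hL]
  have hτpos : 0 < (-ls - 3 * ε) / (lu + ε) := div_pos (by linarith) (by linarith)
  have hLpos : 0 < (lu - ls - 2 * ε) / (lu + ε) := div_pos (by linarith) (by linarith)
  exact ⟨hS, fun m ℓ hℓ => ⟨(hτb m ℓ hℓ).1, (hτb m ℓ hℓ).2, (hLb m ℓ hℓ).1, (hLb m ℓ hℓ).2⟩,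
    hτb.strictMono hτpos, hτb.surjective hτpos, hτb.continuous hτpos.le,
    hLb.strictMono hLpos, hLb.surjective hLpos, hLb.continuous hLpos.le⟩

/-- Stopping-time estimates: let `λˢ < 0 < λᵘ` and `ε > 0` with `3ε < −λˢ`
and `ε < λᵘ`.  Suppose `a, b : ℝ → ℝ` satisfy `(λᵘ − ε)ℓ ≤ a(m+ℓ) − a(m) ≤ (λᵘ + ε)ℓ` and
`(λˢ − ε)ℓ ≤ b(m+ℓ) − b(m) ≤ (λˢ + ε)ℓ` for all `m` and `ℓ ≥ 0`.  Fix `c` and let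
`τ(m) = sup {ℓ | b m + a(m+ℓ) − a m ≤ c}`, `L(m) = m + τ(m)`.  Then `τ(m)` is a well-defined
real (the defining set is nonempty and bounded above), the stated bi-Lipschitz bounds hold for
`τ` and `L`, and in particular `τ` and `L` are (strictly) increasing homeomorphisms of `ℝ`. -/
theorem stopping_time_biLipschitz
    (ls lu ε : ℝ) (hls : ls < 0) (hlu : 0 < lu) (hε : 0 < ε)
    (hε1 : 3 * ε < -ls) (hε2 : ε < lu)
    (a b : ℝ → ℝ)
    (ha : ∀ m ℓ : ℝ, 0 ≤ ℓ →
      (lu - ε) * ℓ ≤ a (m + ℓ) - a m ∧ a (m + ℓ) - a m ≤ (lu + ε) * ℓ)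
    (hb : ∀ m ℓ : ℝ, 0 ≤ ℓ →
      (ls - ε) * ℓ ≤ b (m + ℓ) - b m ∧ b (m + ℓ) - b m ≤ (ls + ε) * ℓ)
    (c : ℝ) (τ L : ℝ → ℝ)
    (hτ : ∀ m, τ m = sSup {ℓ : ℝ | b m + (a (m + ℓ) - a m) ≤ c})
    (hL : ∀ m, L m = m + τ m) :
    (∀ m : ℝ, {ℓ : ℝ | b m + (a (m + ℓ) - a m) ≤ c}.Nonempty ∧
      BddAbove {ℓ : ℝ | b m + (a (m + ℓ) - a m) ≤ c}) ∧
    (∀ m ℓ : ℝ, 0 ≤ ℓ →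
      ((-ls - 3 * ε) / (lu + ε)) * ℓ ≤ τ (m + ℓ) - τ m ∧
      τ (m + ℓ) - τ m ≤ ((-ls + 3 * ε) / (lu - ε)) * ℓ ∧
      ((lu - ls - 2 * ε) / (lu + ε)) * ℓ ≤ L (m + ℓ) - L m ∧
      L (m + ℓ) - L m ≤ ((lu - ls + 2 * ε) / (lu - ε)) * ℓ) ∧
    StrictMono τ ∧ Function.Surjective τ ∧ Continuous τ ∧
    StrictMono L ∧ Function.Surjective L ∧ Continuous L :=
  stopping_time_biLipschitz_general ls lu ε hε hε1 hε2 a b ha hb c τ L hτ hL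
end

section
/- Let λ^s < 0 < λ^u and let ε > 0 satisfy 3ε < −λ^s and ε < λ^u. Let a, b : ℝ → ℝ with a(0) = b(0) = 0 satisfy, for all m ∈ ℝ and all ℓ ≥ 0: (λ^u − ε)ℓ ≤ a(m + ℓ) − a(m) ≤ (λ^u + ε)ℓ and (λ^s − ε)ℓ ≤ b(m + ℓ) − b(m) ≤ (λ^s + ε)ℓ. Fix c > 0 and define τ(ℓ) = sup { t ∈ ℝ : b(ℓ) + a(ℓ + t) − a(ℓ) ≤ c }. Then for every ℓ with −c/(−λ^s + ε) ≤ ℓ ≤ 0 one has τ(ℓ) ≥ 0 and (c + (−λ^s + ε)ℓ)/(λ^u + ε) ≤ τ(ℓ) ≤ (c + (−λ^s − ε)ℓ)/(λ^u − ε). -/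
/-- Explicit stopping-time bounds: with `λˢ < 0 < λᵘ`, `ε > 0`, `3ε < −λˢ`,
`ε < λᵘ`, cocycle bounds on `a, b : ℝ → ℝ` with `a 0 = b 0 = 0`, and `c > 0`, set
`τ(ℓ) = sup {t | b ℓ + a(ℓ+t) − a ℓ ≤ c}`.  Then for all `−c/(−λˢ+ε) ≤ ℓ ≤ 0` one has
`τ ℓ ≥ 0` and `(c + (−λˢ+ε)ℓ)/(λᵘ+ε) ≤ τ ℓ ≤ (c + (−λˢ−ε)ℓ)/(λᵘ−ε)`. -/
theorem stopping_time_explicit_bounds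
    (ls lu ε : ℝ) (hls : ls < 0) (hlu : 0 < lu) (hε : 0 < ε)
    (hε1 : 3 * ε < -ls) (hε2 : ε < lu)
    (a b : ℝ → ℝ) (ha0 : a 0 = 0) (hb0 : b 0 = 0)
    (ha : ∀ m ℓ : ℝ, 0 ≤ ℓ →
      (lu - ε) * ℓ ≤ a (m + ℓ) - a m ∧ a (m + ℓ) - a m ≤ (lu + ε) * ℓ)
    (hb : ∀ m ℓ : ℝ, 0 ≤ ℓ →
      (ls - ε) * ℓ ≤ b (m + ℓ) - b m ∧ b (m + ℓ) - b m ≤ (ls + ε) * ℓ)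
    (c : ℝ) (hc : 0 < c) (τ : ℝ → ℝ)
    (hτ : ∀ ℓ, τ ℓ = sSup {t : ℝ | b ℓ + (a (ℓ + t) - a ℓ) ≤ c}) :
    ∀ ℓ : ℝ, -c / (-ls + ε) ≤ ℓ → ℓ ≤ 0 →
      0 ≤ τ ℓ ∧
      (c + (-ls + ε) * ℓ) / (lu + ε) ≤ τ ℓ ∧
      τ ℓ ≤ (c + (-ls - ε) * ℓ) / (lu - ε) := by
  intro ℓ hℓ1 hℓ2
  have hlsε : 0 < -ls + ε := by linarith
  have hluε : 0 < lu + ε := by linarith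
  have hluε' : 0 < lu - ε := by linarith
  -- bounds on b ℓ
  have hbb := hb ℓ (-ℓ) (by linarith)
  have hadd : ℓ + -ℓ = 0 := by ring
  rw [hadd, hb0] at hbb
  have hb_up : b ℓ ≤ (ls - ε) * ℓ := by nlinarith [hbb.1]
  have hb_lo : (ls + ε) * ℓ ≤ b ℓ := by nlinarith [hbb.2]
  -- numerators are nonneg
  have hℓ1' : -c ≤ ℓ * (-ls + ε) := (div_le_iff₀ hlsε).mp hℓ1
  have hn1 : 0 ≤ c + (-ls + ε) * ℓ := by nlinarith
  have hn2 : 0 ≤ c + (-ls - ε) * ℓ := by nlinarith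
  set T₁ : ℝ := (c + (-ls + ε) * ℓ) / (lu + ε) with hT₁def
  set T₂ : ℝ := (c + (-ls - ε) * ℓ) / (lu - ε) with hT₂def
  have hT1 : 0 ≤ T₁ := div_nonneg hn1 hluε.le
  have hT2 : 0 ≤ T₂ := div_nonneg hn2 hluε'.le
  set S : Set ℝ := {t : ℝ | b ℓ + (a (ℓ + t) - a ℓ) ≤ c} with hSdef
  -- T₁ ∈ S
  have hmem : T₁ ∈ S := by
    have haT := (ha ℓ T₁ hT1).2
    have : (lu + ε) * T₁ = c + (-ls + ε) * ℓ := by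
      rw [hT₁def]; field_simp
    simp only [hSdef, Set.mem_setOf_eq]
    linarith
  -- T₂ is an upper bound
  have hub : ∀ t ∈ S, t ≤ T₂ := by
    intro t ht
    rcases le_or_gt t 0 with h | h
    · linarith
    · have haT := (ha ℓ t h.le).1
      simp only [hSdef, Set.mem_setOf_eq] at ht
      have : (lu - ε) * t ≤ c + (-ls - ε) * ℓ := by linarith
      rw [hT₂def, le_div_iff₀ hluε']
      linarith [this]
  have hne : S.Nonempty := ⟨T₁, hmem⟩
  have hbdd : BddAbove S := ⟨T₂, fun t ht => hub t ht⟩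
  have h1 : T₁ ≤ τ ℓ := by rw [hτ ℓ]; exact le_csSup hbdd hmem
  have h2 : τ ℓ ≤ T₂ := by rw [hτ ℓ]; exact csSup_le hne hub
  exact ⟨le_trans hT1 h1, h1, h2⟩
end

section
/- Let E and F be real normed vector spaces and equip E × F with the norm ‖(x, y)‖ = max(‖x‖, ‖y‖). Let A : E → E be a linear map, let B : F → F be a linear map with ‖B y‖ ≥ β‖y‖ for all y ∈ F, let ε ≥ 0, and let f : E × F → E × F be a map such that p ↦ f(p) − (A p₁, B p₂) is ε-Lipschitz. Let h, h' : E → F be 1-Lipschitz functions such that f maps the graph of h into the graph of h', i.e. f(u, h(u)) = (w, h'(w)) for some w, for every u ∈ E. Then for every (u, v) ∈ E × F, writing (u', v') = f(u, v), one has ‖v' − h'(u')‖ ≥ (β − 2ε)·‖v − h(u)‖. -/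
/-- Vertical-distance expansion.  `E × F` carries the sup norm (Mathlib's
product norm).  Let `A : E → E` linear, `B : F → F` linear with `‖B y‖ ≥ β ‖y‖`, `ε ≥ 0`, and
let `f : E × F → E × F` differ from `(A, B)` by an `ε`-Lipschitz map.  If `h, h' : E → F` are
`1`-Lipschitz and `f` maps the graph of `h` into the graph of `h'`, then for every `(u, v)`,
writing `(u', v') = f (u, v)`, one has `‖v' − h' u'‖ ≥ (β − 2ε) ‖v − h u‖`. -/
theorem graph_distance_expansion
    {E F : Type*} [NormedAddCommGroup E] [NormedSpace ℝ E]
    [NormedAddCommGroup F] [NormedSpace ℝ F]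
    (β ε : ℝ) (hε : 0 ≤ ε)
    (A : E →ₗ[ℝ] E) (B : F →ₗ[ℝ] F) (hB : ∀ y, β * ‖y‖ ≤ ‖B y‖)
    (f : E × F → E × F)
    (hf : ∀ p q : E × F,
      ‖(f p - (A p.1, B p.2)) - (f q - (A q.1, B q.2))‖ ≤ ε * ‖p - q‖)
    (h h' : E → F)
    (hh : ∀ x y, ‖h x - h y‖ ≤ ‖x - y‖) (hh' : ∀ x y, ‖h' x - h' y‖ ≤ ‖x - y‖)
    (hgraph : ∀ u : E, (f (u, h u)).2 = h' ((f (u, h u)).1)) :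
    ∀ u : E, ∀ v : F,
      (β - 2 * ε) * ‖v - h u‖ ≤ ‖(f (u, v)).2 - h' ((f (u, v)).1)‖ := by
  intro u v
  set d := ‖v - h u‖ with hd
  set δ : E × F := (f (u, v) - ((A u : E), (B v : F))) -
      (f (u, h u) - ((A u : E), (B (h u) : F))) with hδ
  have hnorm : ‖((u, v) : E × F) - (u, h u)‖ = d := by
    simp [Prod.norm_def, Prod.sub_def, hd]
  have hδn : ‖δ‖ ≤ ε * d := by
    have h0 := hf (u, v) (u, h u)
    rw [hnorm] at h0
    exact h0
  have hδ1 : ‖δ.1‖ ≤ ε * d := le_trans (norm_fst_le δ) hδn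
  have hδ2 : ‖δ.2‖ ≤ ε * d := le_trans (norm_snd_le δ) hδn
  have h1 : δ.1 = (f (u, v)).1 - (f (u, h u)).1 := by
    simp [hδ, Prod.sub_def]
  have h2 : δ.2 = (f (u, v)).2 - (f (u, h u)).2 - B (v - h u) := by
    simp [hδ, Prod.sub_def, map_sub]
    abel
  -- lower bound on ‖(f (u,v)).2 - (f (u, h u)).2‖
  have key1 : β * d - ε * d ≤ ‖(f (u, v)).2 - (f (u, h u)).2‖ := by
    have hB' := hB (v - h u)
    have heq : (f (u, v)).2 - (f (u, h u)).2 - δ.2 = B (v - h u) := by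
      rw [h2]; abel
    have t := norm_sub_le ((f (u, v)).2 - (f (u, h u)).2) δ.2
    rw [heq] at t
    linarith
  have key2 : ‖h' ((f (u, h u)).1) - h' ((f (u, v)).1)‖ ≤ ε * d := by
    refine le_trans (hh' _ _) ?_
    rw [show (f (u, h u)).1 - (f (u, v)).1 = -δ.1 by rw [h1]; abel, norm_neg]
    exact hδ1
  have htri : ‖(f (u, v)).2 - (f (u, h u)).2‖ -
      ‖h' ((f (u, h u)).1) - h' ((f (u, v)).1)‖ ≤
      ‖(f (u, v)).2 - h' ((f (u, v)).1)‖ := by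
    rw [hgraph u]
    have tri := norm_sub_le_norm_sub_add_norm_sub ((f (u, v)).2)
      (h' ((f (u, v)).1)) (h' ((f (u, h u)).1))
    have hrev : ‖h' ((f (u, v)).1) - h' ((f (u, h u)).1)‖ =
        ‖h' ((f (u, h u)).1) - h' ((f (u, v)).1)‖ := norm_sub_rev _ _
    linarith
  linarith
end

section
/- Let κ₁, κ₂ > 0 with κ₁ ≤ κ₂, let c₁, c₂ ≥ 0, and let T > 0. Let L : ℝ → ℝ satisfy κ₁ℓ ≤ L(m + ℓ) − L(m) ≤ κ₂ℓ for all m ∈ ℝ and ℓ ≥ 0. Let E, F ⊆ ℝ be Lebesgue measurable sets with Leb([0, T] ∩ E) ≥ (1 − c₁)·T and Leb(L([0, T]) ∩ F) ≥ (1 − c₂)·Leb(L([0, T])). Then Leb([0, T] ∩ E ∩ L⁻¹(F)) ≥ (1 − c₁ − c₂·κ₂/κ₁)·T. -/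
open MeasureTheory

/-!
The lower bound `κ₁ ℓ ≤ L (m + ℓ) - L m` makes `L` increasing with a `κ₁⁻¹`-Lipschitz inverse,
so `L` expands Lebesgue measure by a factor of at least `κ₁`. The bad times `[0, T] \ L⁻¹(F)` are
mapped into `L([0, T]) \ F`, of measure at most `c₂ Leb(L([0, T])) ≤ c₂ (L T - L 0) ≤ c₂ κ₂ T`,
so they have measure at most `c₂ κ₂ T / κ₁`. Removing them from `[0, T] ∩ E`, of measure at least
`(1 - c₁) T`, leaves the claimed bound.
-/

theorem MeasureTheory.measureReal_sdiff_le_of_density {α : Type*} [MeasurableSpace α]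
    {μ : Measure α} {s t : Set α} {c : ℝ} (ht : NullMeasurableSet t μ) (hs : μ s ≠ ⊤)
    (h : ENNReal.ofReal (1 - c) * μ s ≤ μ (s ∩ t)) :
    μ.real (s \ t) ≤ c * μ.real s := by
  have hst : (1 - c) * μ.real s ≤ μ.real (s ∩ t) := calc
    (1 - c) * μ.real s ≤ max (1 - c) 0 * μ.real s := by gcongr; exact le_max_left _ _
    _ = (ENNReal.ofReal (1 - c) * μ s).toReal := by
      rw [ENNReal.toReal_mul, ENNReal.toReal_ofReal']; rfl
    _ ≤ μ.real (s ∩ t) := ENNReal.toReal_mono (measure_ne_top_of_subset Set.inter_subset_left hs) h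
  linarith [measureReal_inter_add_sdiff₀ (s := s) ht hs]

theorem AntilipschitzWith.measureReal_le_mul_measureReal_image {f : ℝ → ℝ} {K : NNReal}
    (hf : AntilipschitzWith K f) {s : Set ℝ} (hs : volume (f '' s) ≠ ⊤) :
    volume.real s ≤ K * volume.real (f '' s) := by
  have h := hf.le_hausdorffMeasure_image zero_le_one s
  rw [hausdorffMeasure_real, ENNReal.rpow_one] at h
  simpa [measureReal_def] using ENNReal.toReal_mono (ENNReal.mul_ne_top ENNReal.coe_ne_top hs) h

theorem Monotone.measure_image_Icc_ne_top {f : ℝ → ℝ} (hf : Monotone f) (a b : ℝ) :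
    volume (f '' Set.Icc a b) ≠ ⊤ :=
  measure_ne_top_of_subset hf.image_Icc_subset measure_Icc_lt_top.ne

theorem Monotone.measureReal_image_Icc_le {f : ℝ → ℝ} (hf : Monotone f) {a b : ℝ} (hab : a ≤ b) :
    volume.real (f '' Set.Icc a b) ≤ f b - f a := calc
  volume.real (f '' Set.Icc a b) ≤ volume.real (Set.Icc (f a) (f b)) :=
    measureReal_mono hf.image_Icc_subset measure_Icc_lt_top.ne
  _ = f b - f a := Real.volume_real_Icc_of_le (hf hab)

section IncrementLowerBound

variable {κ₁ : ℝ} {L : ℝ → ℝ}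

theorem mul_sub_le_sub_of_increment_lower_bound
    (hL : ∀ m ℓ : ℝ, 0 ≤ ℓ → κ₁ * ℓ ≤ L (m + ℓ) - L m) {x y : ℝ} (hxy : x ≤ y) :
    κ₁ * (y - x) ≤ L y - L x := by
  simpa using hL x (y - x) (sub_nonneg.2 hxy)

theorem monotone_of_increment_lower_bound
    (hL : ∀ m ℓ : ℝ, 0 ≤ ℓ → κ₁ * ℓ ≤ L (m + ℓ) - L m) (hκ₁ : 0 ≤ κ₁) : Monotone L :=
  fun x y hxy => by
    nlinarith [mul_sub_le_sub_of_increment_lower_bound hL hxy, mul_nonneg hκ₁ (sub_nonneg.2 hxy)]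

theorem antilipschitzWith_of_increment_lower_bound
    (hL : ∀ m ℓ : ℝ, 0 ≤ ℓ → κ₁ * ℓ ≤ L (m + ℓ) - L m) (hκ₁ : 0 < κ₁) :
    AntilipschitzWith κ₁⁻¹.toNNReal L := by
  have key : ∀ x y, x ≤ y → |x - y| ≤ κ₁⁻¹ * |L x - L y| := fun x y hxy => by
    have hmono := monotone_of_increment_lower_bound hL hκ₁.le hxy
    rw [abs_sub_comm, abs_of_nonneg (sub_nonneg.2 hxy), abs_sub_comm,
      abs_of_nonneg (sub_nonneg.2 hmono), le_inv_mul_iff₀ hκ₁]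
    exact mul_sub_le_sub_of_increment_lower_bound hL hxy
  refine AntilipschitzWith.of_le_mul_dist fun x y => ?_
  rw [Real.dist_eq, Real.dist_eq, Real.coe_toNNReal _ (inv_nonneg.2 hκ₁.le)]
  rcases le_total x y with hxy | hyx
  · exact key x y hxy
  · rw [abs_sub_comm, abs_sub_comm (L x)]
    exact key y x hyx

theorem measureReal_sdiff_preimage_le_of_increment_lower_bound {c : ℝ}
    (hL : ∀ m ℓ : ℝ, 0 ≤ ℓ → κ₁ * ℓ ≤ L (m + ℓ) - L m) (hκ₁ : 0 < κ₁) {s F : Set ℝ}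
    (hF : MeasurableSet F) (hs : volume (L '' s) ≠ ⊤)
    (hFdense : ENNReal.ofReal (1 - c) * volume (L '' s) ≤ volume (L '' s ∩ F)) :
    volume.real (s \ L ⁻¹' F) ≤ κ₁⁻¹ * (c * volume.real (L '' s)) := by
  have himage : L '' (s \ L ⁻¹' F) ⊆ L '' s \ F := by
    rintro _ ⟨x, ⟨hxs, hxF⟩, rfl⟩
    exact ⟨⟨x, hxs, rfl⟩, hxF⟩
  calc volume.real (s \ L ⁻¹' F) ≤ κ₁⁻¹ * volume.real (L '' (s \ L ⁻¹' F)) := by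
        simpa [Real.coe_toNNReal _ (inv_nonneg.2 hκ₁.le)] using
          (antilipschitzWith_of_increment_lower_bound hL hκ₁).measureReal_le_mul_measureReal_image
            (measure_ne_top_of_subset (himage.trans Set.sdiff_subset) hs)
    _ ≤ κ₁⁻¹ * volume.real (L '' s \ F) := by
      gcongr
      exact measure_ne_top_of_subset Set.sdiff_subset hs
    _ ≤ κ₁⁻¹ * (c * volume.real (L '' s)) := by
      gcongr
      exact measureReal_sdiff_le_of_density hF.nullMeasurableSet hs hFdense

end IncrementLowerBound

theorem simultaneous_density_estimate_general
    (κ₁ κ₂ c₁ c₂ T : ℝ) (h1 : 0 < κ₁)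
    (hc2 : 0 ≤ c₂) (hT : 0 < T)
    (L : ℝ → ℝ)
    (hL : ∀ m ℓ : ℝ, 0 ≤ ℓ → κ₁ * ℓ ≤ L (m + ℓ) - L m ∧ L (m + ℓ) - L m ≤ κ₂ * ℓ)
    (E F : Set ℝ) (hF : MeasurableSet F)
    (hEdense : ENNReal.ofReal ((1 - c₁) * T) ≤ volume (Set.Icc (0 : ℝ) T ∩ E))
    (hFdense : ENNReal.ofReal (1 - c₂) * volume (L '' Set.Icc (0 : ℝ) T) ≤
      volume (L '' Set.Icc (0 : ℝ) T ∩ F)) :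
    ENNReal.ofReal ((1 - c₁ - c₂ * κ₂ / κ₁) * T) ≤
      volume (Set.Icc (0 : ℝ) T ∩ E ∩ L ⁻¹' F) := by
  set I := Set.Icc (0 : ℝ) T
  have hL₁ : ∀ m ℓ : ℝ, 0 ≤ ℓ → κ₁ * ℓ ≤ L (m + ℓ) - L m := fun m ℓ hℓ => (hL m ℓ hℓ).1
  have hmono := monotone_of_increment_lower_bound hL₁ h1.le
  have hJ : volume.real (L '' I) ≤ κ₂ * T :=
    (hmono.measureReal_image_Icc_le hT.le).trans (by simpa using (hL 0 T hT.le).2)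
  have hbad : volume.real (I \ L ⁻¹' F) ≤ κ₁⁻¹ * (c₂ * (κ₂ * T)) := by
    refine (measureReal_sdiff_preimage_le_of_increment_lower_bound hL₁ h1 hF
      (hmono.measure_image_Icc_ne_top 0 T) hFdense).trans ?_
    gcongr
  have hgood : (1 - c₁) * T ≤ volume.real (I ∩ E) :=
    (ENNReal.ofReal_le_iff_le_toReal (measure_ne_top_of_subset Set.inter_subset_left
      measure_Icc_lt_top.ne)).1 hEdense
  have hG : (I ∩ E) \ (I \ L ⁻¹' F) = I ∩ E ∩ L ⁻¹' F := by
    ext x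
    simp only [Set.mem_sdiff, Set.mem_inter_iff, Set.mem_preimage]
    tauto
  refine ENNReal.ofReal_le_of_le_toReal ?_
  rw [← hG]
  calc (1 - c₁ - c₂ * κ₂ / κ₁) * T = (1 - c₁) * T - κ₁⁻¹ * (c₂ * (κ₂ * T)) := by field_simp
    _ ≤ volume.real (I ∩ E) - volume.real (I \ L ⁻¹' F) := by gcongr
    _ ≤ volume.real ((I ∩ E) \ (I \ L ⁻¹' F)) :=
      le_measureReal_sdiff (measure_ne_top_of_subset Set.sdiff_subset measure_Icc_lt_top.ne)

/-- Density estimate along a bi-Lipschitz time change.  Let `0 < κ₁ ≤ κ₂`,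
`c₁, c₂ ≥ 0`, `T > 0`, and let `L : ℝ → ℝ` satisfy `κ₁ ℓ ≤ L(m+ℓ) − L(m) ≤ κ₂ ℓ` for `ℓ ≥ 0`.
If `Leb([0,T] ∩ E) ≥ (1 − c₁) T` and `Leb(L([0,T]) ∩ F) ≥ (1 − c₂) Leb(L([0,T]))`, then
`Leb([0,T] ∩ E ∩ L⁻¹(F)) ≥ (1 − c₁ − c₂ κ₂/κ₁) T`. -/
theorem simultaneous_density_estimate
    (κ₁ κ₂ c₁ c₂ T : ℝ) (h1 : 0 < κ₁) (h12 : κ₁ ≤ κ₂)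
    (hc1 : 0 ≤ c₁) (hc2 : 0 ≤ c₂) (hT : 0 < T)
    (L : ℝ → ℝ)
    (hL : ∀ m ℓ : ℝ, 0 ≤ ℓ → κ₁ * ℓ ≤ L (m + ℓ) - L m ∧ L (m + ℓ) - L m ≤ κ₂ * ℓ)
    (E F : Set ℝ) (hE : MeasurableSet E) (hF : MeasurableSet F)
    (hEdense : ENNReal.ofReal ((1 - c₁) * T) ≤ volume (Set.Icc (0 : ℝ) T ∩ E))
    (hFdense : ENNReal.ofReal (1 - c₂) * volume (L '' Set.Icc (0 : ℝ) T) ≤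
      volume (L '' Set.Icc (0 : ℝ) T ∩ F)) :
    ENNReal.ofReal ((1 - c₁ - c₂ * κ₂ / κ₁) * T) ≤
      volume (Set.Icc (0 : ℝ) T ∩ E ∩ L ⁻¹' F) :=
  simultaneous_density_estimate_general κ₁ κ₂ c₁ c₂ T h1 hc2 hT L hL E F hF hEdense hFdense
end

section
/- Let G be a measurable space, ν a probability measure on G, M a standard Borel space, and T : G × M → M a jointly measurable map. Let μ be a Borel probability measure on M such that T(g, ·) preserves μ for ν-a.e. g ∈ G. Suppose there is f₀ ∈ G with {f₀} measurable, ν({f₀}) > 0, and T(f₀, ·) ergodic with respect to μ. If μ = μ₁ + μ₂ where μ₁ and μ₂ are mutually singular finite Borel measures each of which is ν-stationary, then μ₁ = 0 or μ₂ = 0. In particular, μ is ergodic as a ν-stationary measure. -/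
open MeasureTheory

/-!
If `μ = μ₁ + μ₂` with `μ₁ ⟂ₘ μ₂` stationary, take `S` with `μ₁ S = 0 = μ₂ Sᶜ`. Stationarity
writes `μ₁ S` and `μ₂ Sᶜ` as `ν`-averages of `μ₁ (T_g⁻¹ S)` and `μ₂ (T_g⁻¹ Sᶜ)`, so both vanish for
`ν`-a.e. `g`, which makes `S` a `μ`-a.e. invariant set of `T_g` for `ν`-a.e. `g`. Since `f₀` is an
atom of `ν`, it is among these `g`, and ergodicity of `T_{f₀}` forces `μ S = 0` or `μ Sᶜ = 0`.
-/

namespace MeasureTheory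

variable {α : Type*} [MeasurableSpace α]

theorem of_ae_of_measure_singleton_ne_zero {μ : Measure α} {p : α → Prop}
    (h : ∀ᵐ x ∂μ, p x) {a : α} (ha : μ {a} ≠ 0) : p a := by
  by_contra hpa
  exact ha (measure_mono_null (Set.singleton_subset_iff.mpr hpa) (ae_iff.mp h))

theorem ae_add_measure_mem_iff_of_null {μ₁ μ₂ : Measure α} {f : α → α} {s : Set α}
    (h₁ : μ₁ s = 0) (hf₁ : μ₁ (f ⁻¹' s) = 0) (h₂ : μ₂ sᶜ = 0) (hf₂ : μ₂ (f ⁻¹' sᶜ) = 0) :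
    ∀ᵐ x ∂(μ₁ + μ₂), f x ∈ s ↔ x ∈ s := by
  rw [measure_eq_zero_iff_ae_notMem] at h₁ hf₁ h₂ hf₂
  refine ae_add_measure_iff.mpr ⟨?_, ?_⟩
  · filter_upwards [h₁, hf₁] with x hx hfx using iff_of_false hfx hx
  · filter_upwards [h₂, hf₂] with x hx hfx using iff_of_true (not_not.mp hfx) (not_not.mp hx)

theorem Measure.eq_zero_of_null_of_null_compl {μ : Measure α} {s : Set α} (hs : μ s = 0)
    (hsc : μ sᶜ = 0) : μ = 0 := by
  rw [← Measure.measure_univ_eq_zero, ← Set.union_compl_self s]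
  exact measure_union_null hs hsc

end MeasureTheory

theorem QuasiErgodic.measure_eq_zero_or_compl_of_ae_mem_iff {α : Type*} [MeasurableSpace α]
    {μ : Measure α} {f : α → α} {s : Set α} (hf : QuasiErgodic f μ) (hs : MeasurableSet s)
    (hfs : ∀ᵐ x ∂μ, f x ∈ s ↔ x ∈ s) : μ s = 0 ∨ μ sᶜ = 0 :=
  (hf.ae_empty_or_univ₀ hs.nullMeasurableSet (Filter.eventuallyEq_set.mpr hfs)).imp
    ae_eq_empty.mp ae_eq_univ.mp

namespace MeasureTheory.Measure

variable {G M : Type*} [MeasurableSpace G] [MeasurableSpace M]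

def IsStationary (η : Measure M) (ν : Measure G) (T : G × M → M) : Prop :=
  ∀ A : Set M, MeasurableSet A → η A = ∫⁻ g, η {x | T (g, x) ∈ A} ∂ν

theorem IsStationary.ae_measure_preimage_eq_zero {ν : Measure G} {T : G × M → M}
    {η : Measure M} [SFinite η] (hη : η.IsStationary ν T) (hT : Measurable T) {s : Set M}
    (hs : MeasurableSet s) (hηs : η s = 0) :
    ∀ᵐ g ∂ν, η ((fun x => T (g, x)) ⁻¹' s) = 0 := by
  have hmeas : Measurable fun g => η {x | T (g, x) ∈ s} :=
    measurable_measure_prodMk_left (hT hs)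
  rw [hη s hs, lintegral_eq_zero_iff hmeas] at hηs
  exact hηs

end MeasureTheory.Measure

theorem stationary_measure_indecomposable_of_ergodic_atom_general
    {G M : Type*} [MeasurableSpace G] [MeasurableSpace M]
    (ν : Measure G)
    (T : G × M → M) (hT : Measurable T)
    (μ : Measure M)
    (f₀ : G) (hf₀ : 0 < ν {f₀})
    (herg : Ergodic (fun x => T (f₀, x)) μ) :
    (∀ μ₁ μ₂ : Measure M, IsFiniteMeasure μ₁ → IsFiniteMeasure μ₂ →
      (∀ A : Set M, MeasurableSet A → μ₁ A = ∫⁻ g, μ₁ {x | T (g, x) ∈ A} ∂ν) →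
      (∀ A : Set M, MeasurableSet A → μ₂ A = ∫⁻ g, μ₂ {x | T (g, x) ∈ A} ∂ν) →
      μ₁ ⟂ₘ μ₂ → μ = μ₁ + μ₂ → μ₁ = 0 ∨ μ₂ = 0) ∧
    (∀ A : Set M, MeasurableSet A →
      (∀ᵐ g ∂ν, ∀ᵐ x ∂μ, (x ∈ A → T (g, x) ∈ A) ∧ (x ∉ A → T (g, x) ∉ A)) →
      μ A = 0 ∨ μ Aᶜ = 0) := by
  have null_or_conull : ∀ A : Set M, MeasurableSet A →
      (∀ᵐ g ∂ν, ∀ᵐ x ∂μ, T (g, x) ∈ A ↔ x ∈ A) → μ A = 0 ∨ μ Aᶜ = 0 := fun A hA hinv =>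
    herg.quasiErgodic.measure_eq_zero_or_compl_of_ae_mem_iff hA
      (of_ae_of_measure_singleton_ne_zero hinv hf₀.ne')
  refine ⟨fun μ₁ μ₂ _ _ hs₁ hs₂ hsing heq => ?_, fun A hA hinv => null_or_conull A hA ?_⟩
  · have hs₁ : μ₁.IsStationary ν T := hs₁
    have hs₂ : μ₂.IsStationary ν T := hs₂
    set S := hsing.nullSet
    have hS : MeasurableSet S := hsing.measurableSet_nullSet
    have hinv : ∀ᵐ g ∂ν, ∀ᵐ x ∂μ, T (g, x) ∈ S ↔ x ∈ S := by
      filter_upwards [hs₁.ae_measure_preimage_eq_zero hT hS hsing.measure_nullSet,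
        hs₂.ae_measure_preimage_eq_zero hT hS.compl hsing.measure_compl_nullSet] with g h₁ h₂
      exact heq ▸ ae_add_measure_mem_iff_of_null hsing.measure_nullSet h₁
        hsing.measure_compl_nullSet h₂
    rcases null_or_conull S hS hinv with h | h <;>
      rw [heq, Measure.add_apply, add_eq_zero] at h
    · exact .inr (Measure.eq_zero_of_null_of_null_compl h.2 hsing.measure_compl_nullSet)
    · exact .inl (Measure.eq_zero_of_null_of_null_compl hsing.measure_nullSet h.1)
  · filter_upwards [hinv] with g hg
    filter_upwards [hg] with x hx
    exact ⟨not_imp_not.mp hx.2, hx.1⟩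

/-- Let `ν` be a probability measure on a measurable space `G`, `M` a
standard Borel space, `T : G × M → M` jointly measurable, and `μ` a Borel probability measure
on `M` preserved by `T(g, ·)` for `ν`-a.e. `g`.  Suppose some `f₀` with `ν {f₀} > 0` acts
ergodically on `(M, μ)`.  Then whenever `μ = μ₁ + μ₂` with `μ₁, μ₂` mutually singular finite
`ν`-stationary measures, `μ₁ = 0` or `μ₂ = 0`; in particular `μ` is ergodic as a
`ν`-stationary measure (every invariant set is null or conull). -/
theorem stationary_measure_indecomposable_of_ergodic_atom
    {G M : Type*} [MeasurableSpace G] [MeasurableSpace M] [StandardBorelSpace M]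
    (ν : Measure G) [IsProbabilityMeasure ν]
    (T : G × M → M) (hT : Measurable T)
    (μ : Measure M) [IsProbabilityMeasure μ]
    (hpres : ∀ᵐ g ∂ν, MeasurePreserving (fun x => T (g, x)) μ μ)
    (f₀ : G) (hf₀meas : MeasurableSet ({f₀} : Set G)) (hf₀ : 0 < ν {f₀})
    (herg : Ergodic (fun x => T (f₀, x)) μ) :
    (∀ μ₁ μ₂ : Measure M, IsFiniteMeasure μ₁ → IsFiniteMeasure μ₂ →
      (∀ A : Set M, MeasurableSet A → μ₁ A = ∫⁻ g, μ₁ {x | T (g, x) ∈ A} ∂ν) →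
      (∀ A : Set M, MeasurableSet A → μ₂ A = ∫⁻ g, μ₂ {x | T (g, x) ∈ A} ∂ν) →
      μ₁ ⟂ₘ μ₂ → μ = μ₁ + μ₂ → μ₁ = 0 ∨ μ₂ = 0) ∧
    (∀ A : Set M, MeasurableSet A →
      (∀ᵐ g ∂ν, ∀ᵐ x ∂μ, (x ∈ A → T (g, x) ∈ A) ∧ (x ∉ A → T (g, x) ∉ A)) →
      μ A = 0 ∨ μ Aᶜ = 0) :=
  stationary_measure_indecomposable_of_ergodic_atom_general ν T hT μ f₀ hf₀ herg
end

section
/- Let η be a nonzero locally finite Borel measure on ℝ. Then the set 𝒜(η) = { (s, t) ∈ (ℝ ∖ {0}) × ℝ : there exists c > 0 with (x ↦ s·x + t)_*η = c·η } is a subgroup of the affine group of ℝ — it contains the identity (1, 0) and is closed under composition and inversion of the corresponding affine maps — and it is a closed subset of (ℝ ∖ {0}) × ℝ. -/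
open MeasureTheory

/-- The set of (parameters of) invertible affine maps `x ↦ s·x + t` of `ℝ` carrying the locally
finite measure `η` to a positive multiple of itself. -/
def affineQuasiStabilizer (η : Measure ℝ) : Set (ℝ × ℝ) :=
  {p : ℝ × ℝ | p.1 ≠ 0 ∧ ∃ c : ℝ, 0 < c ∧
    Measure.map (fun x : ℝ => p.1 * x + p.2) η = ENNReal.ofReal c • η}

/-! The group laws follow from `(φ ∘ ψ)_* = φ_* ∘ ψ_*`. For closedness, test measures against
`C_c(ℝ)`: regular measures are determined by these integrals, so if `f₀ ≥ 0` has `∫ f₀ dη > 0`,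
then `ψ_*η ≃ η` iff `∫ f∘ψ dη · ∫ f₀ dη = ∫ f₀∘ψ dη · ∫ f dη` for all `f ∈ C_c(ℝ)`. Each such
equation cuts out a closed set of parameters, because by dominated convergence
`(s, t) ↦ ∫ f (s x + t) dη(x)` is continuous on `s ≠ 0`. -/

open Filter Topology Metric Set Function
open scoped CompactlySupported ENNReal

namespace MeasureTheory.Measure

theorem map_eq_inv_smul_of_leftInverse {α : Type*} [MeasurableSpace α] {μ : Measure α}
    {f g : α → α} (hf : Measurable f) (hg : Measurable g) (hgf : LeftInverse g f)
    {a : ℝ≥0∞} (ha₀ : a ≠ 0) (ha : a ≠ ∞) (h : μ.map f = a • μ) :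
    μ.map g = a⁻¹ • μ := by
  have hμ : μ = a • μ.map g := by
    rw [← Measure.map_smul, ← h, map_map hg hf, hgf.comp_eq_id, map_id]
  calc μ.map g = (a⁻¹ * a) • μ.map g := by rw [ENNReal.inv_mul_cancel ha₀ ha, one_smul]
    _ = a⁻¹ • μ := by rw [mul_smul, ← hμ]

section

variable {X : Type*} [TopologicalSpace X] [T2Space X] [LocallyCompactSpace X]
  [MeasurableSpace X] [BorelSpace X]

theorem exists_nonneg_integral_pos {μ : Measure X} [μ.Regular] (hμ : μ ≠ 0) :
    ∃ f : C_c(X, ℝ), (∀ x, 0 ≤ f x) ∧ 0 < ∫ x, f x ∂μ := by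
  obtain ⟨K, -, hK, hμK⟩ := isOpen_univ.exists_lt_isCompact
    (pos_iff_ne_zero.2 (measure_univ_ne_zero.2 hμ))
  obtain ⟨f, hfK, hfc, -, hf01⟩ :=
    exists_continuousMap_one_of_isCompact_subset_isOpen hK isOpen_univ (subset_univ K)
  refine ⟨⟨f, hasCompactSupport_def.2 hfc⟩, fun x => (hf01 x).1, ?_⟩
  have hKf : K ⊆ support f := fun x hx => by simp [hfK hx]
  refine (integral_pos_iff_support_of_nonneg (fun x => (hf01 x).1) ?_).2
    (hμK.trans_le (measure_mono hKf))
  exact f.continuous.integrable_of_hasCompactSupport (hasCompactSupport_def.2 hfc)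

theorem exists_pos_eq_smul_iff_integral_mul_eq {μ ν : Measure X} [μ.Regular] [ν.Regular]
    (hν : ν ≠ 0) {f₀ : C_c(X, ℝ)} (hf₀ : ∀ x, 0 ≤ f₀ x) (hμf₀ : 0 < ∫ x, f₀ x ∂μ) :
    (∃ c : ℝ, 0 < c ∧ ν = ENNReal.ofReal c • μ) ↔
      ∀ f : C_c(X, ℝ), (∫ x, f x ∂ν) * ∫ x, f₀ x ∂μ = (∫ x, f₀ x ∂ν) * ∫ x, f x ∂μ := by
  constructor
  · rintro ⟨c, hc, rfl⟩ f
    simp only [integral_smul_measure, ENNReal.toReal_ofReal hc.le, smul_eq_mul]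
    ring
  · intro h
    set c := (∫ x, f₀ x ∂ν) / ∫ x, f₀ x ∂μ
    have hc : 0 ≤ c := div_nonneg (integral_nonneg hf₀) hμf₀.le
    have : (ENNReal.ofReal c • μ).Regular := Regular.smul ENNReal.ofReal_ne_top
    have hνc : ν = ENNReal.ofReal c • μ := by
      refine ext_of_integral_eq_on_compactlySupported fun f => ?_
      rw [integral_smul_measure, ENNReal.toReal_ofReal hc, smul_eq_mul, div_mul_eq_mul_div,
        eq_div_iff hμf₀.ne', h f]
    refine ⟨c, hc.lt_of_ne fun hc0 => hν ?_, hνc⟩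
    rw [hνc, ← hc0, ENNReal.ofReal_zero, zero_smul]

end

end MeasureTheory.Measure

theorem regular_map_mul_add (η : Measure ℝ) [IsLocallyFiniteMeasure η] {s : ℝ} (hs : s ≠ 0)
    (t : ℝ) : (η.map fun x => s * x + t).Regular :=
  Measure.Regular.map ((Homeomorph.mulLeft₀ s hs).trans (Homeomorph.addRight t))

theorem continuousOn_integral_comp_mul_add (η : Measure ℝ) [IsLocallyFiniteMeasure η]
    {f : ℝ → ℝ} (hf : Continuous f) (hfc : HasCompactSupport f) :
    ContinuousOn (fun p : ℝ × ℝ => ∫ x, f (p.1 * x + p.2) ∂η) {p | p.1 ≠ 0} := by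
  intro q hq
  have hr : 0 < |q.1| / 2 := half_pos (abs_pos.2 hq)
  set B := closedBall q (|q.1| / 2)
  have hB0 : ∀ p ∈ B, p.1 ≠ 0 := by
    intro p hp h0
    have h1 : |p.1 - q.1| ≤ |q.1| / 2 := (le_max_left _ _).trans (mem_closedBall.1 hp)
    rw [h0, zero_sub, abs_neg] at h1
    linarith
  -- `K` contains `ψ_p⁻¹ (tsupport f)` for every `p ∈ B`, where `ψ_p x = p.1 * x + p.2`.
  set K := (fun z : (ℝ × ℝ) × ℝ => (z.2 - z.1.2) / z.1.1) '' (B ×ˢ tsupport f)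
  have hK : IsCompact K := ((isCompact_closedBall q _).prod hfc).image_of_continuousOn <|
    ContinuousOn.div (by fun_prop) (by fun_prop) fun z hz => hB0 z.1 hz.1
  have hvanish : ∀ p ∈ B, ∀ x ∉ K, f (p.1 * x + p.2) = 0 := by
    intro p hp x hx
    by_contra hne
    refine hx ⟨(p, p.1 * x + p.2), ⟨hp, subset_tsupport f hne⟩, ?_⟩
    field_simp [hB0 p hp]
    ring
  obtain ⟨C, hC⟩ := hf.bounded_above_of_compact_support hfc
  refine ContinuousAt.continuousWithinAt <|
    continuousAt_of_dominated (bound := K.indicator fun _ => C)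
      (Eventually.of_forall fun p => (hf.comp (by fun_prop)).aestronglyMeasurable) ?_
      ((integrableOn_const hK.measure_ne_top).integrable_indicator hK.measurableSet)
      (ae_of_all _ fun x => (hf.comp (by fun_prop)).continuousAt)
  filter_upwards [closedBall_mem_nhds q hr] with p hp
  refine ae_of_all _ fun x => ?_
  by_cases hx : x ∈ K
  · simpa [hx] using hC _
  · simp [hx, hvanish p hp x hx]

namespace affineQuasiStabilizer

variable {η : Measure ℝ}

theorem one_mem : ((1, 0) : ℝ × ℝ) ∈ affineQuasiStabilizer η :=
  ⟨one_ne_zero, 1, one_pos, by simp⟩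

theorem mul_mem {p q : ℝ × ℝ} (hp : p ∈ affineQuasiStabilizer η)
    (hq : q ∈ affineQuasiStabilizer η) :
    (p.1 * q.1, p.1 * q.2 + p.2) ∈ affineQuasiStabilizer η := by
  obtain ⟨hp₀, a, ha, hpη⟩ := hp
  obtain ⟨hq₀, b, hb, hqη⟩ := hq
  refine ⟨mul_ne_zero hp₀ hq₀, a * b, mul_pos ha hb, ?_⟩
  have hcomp : (fun x : ℝ => p.1 * q.1 * x + (p.1 * q.2 + p.2)) =
      (fun y => p.1 * y + p.2) ∘ fun x => q.1 * x + q.2 := by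
    ext x
    simp only [comp_apply]
    ring
  rw [hcomp, ← Measure.map_map (by fun_prop) (by fun_prop), hqη, Measure.map_smul, hpη,
    smul_smul, ← ENNReal.ofReal_mul hb.le, mul_comm b a]

theorem inv_mem {p : ℝ × ℝ} (hp : p ∈ affineQuasiStabilizer η) :
    (p.1⁻¹, -(p.1⁻¹ * p.2)) ∈ affineQuasiStabilizer η := by
  obtain ⟨hp₀, c, hc, hpη⟩ := hp
  refine ⟨inv_ne_zero hp₀, c⁻¹, inv_pos.2 hc, ?_⟩
  have hinv : LeftInverse (fun x : ℝ => p.1⁻¹ * x + -(p.1⁻¹ * p.2)) fun x => p.1 * x + p.2 := by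
    intro x
    field_simp
    ring
  rw [ENNReal.ofReal_inv_of_pos hc]
  exact Measure.map_eq_inv_smul_of_leftInverse (by fun_prop) (by fun_prop) hinv
    (ENNReal.ofReal_pos.2 hc).ne' ENNReal.ofReal_ne_top hpη

theorem isClosed [IsLocallyFiniteMeasure η] (hη : η ≠ 0) :
    IsClosed {q : {s : ℝ // s ≠ 0} × ℝ | ((q.1 : ℝ), q.2) ∈ affineQuasiStabilizer η} := by
  obtain ⟨f₀, hf₀, hηf₀⟩ := Measure.exists_nonneg_integral_pos hη
  have hcont (f : C_c(ℝ, ℝ)) :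
      Continuous fun q : {s : ℝ // s ≠ 0} × ℝ => ∫ x, f (q.1 * x + q.2) ∂η :=
    (continuousOn_integral_comp_mul_add η (map_continuous f) f.hasCompactSupport).comp_continuous
      (f := fun q : {s : ℝ // s ≠ 0} × ℝ => ((q.1 : ℝ), q.2)) (by fun_prop) fun q => q.1.2
  have hset : {q : {s : ℝ // s ≠ 0} × ℝ | ((q.1 : ℝ), q.2) ∈ affineQuasiStabilizer η} =
      ⋂ f : C_c(ℝ, ℝ), {q | (∫ x, f (q.1 * x + q.2) ∂η) * ∫ x, f₀ x ∂η =
        (∫ x, f₀ (q.1 * x + q.2) ∂η) * ∫ x, f x ∂η} := by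
    ext q
    have := regular_map_mul_add η q.1.2 q.2
    simp only [affineQuasiStabilizer, mem_ofPred_eq, mem_iInter, q.1.2, ne_eq, not_false_eq_true,
      true_and]
    rw [Measure.exists_pos_eq_smul_iff_integral_mul_eq
      ((Measure.map_ne_zero_iff (by fun_prop)).2 hη) hf₀ hηf₀]
    refine forall_congr' fun f => ?_
    have hψ : AEMeasurable (fun x => (q.1 : ℝ) * x + q.2) η := by fun_prop
    rw [integral_map hψ (map_continuous f).aestronglyMeasurable,
      integral_map hψ (map_continuous f₀).aestronglyMeasurable]
  rw [hset]
  exact isClosed_iInter fun f =>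
    isClosed_eq ((hcont f).mul continuous_const) ((hcont f₀).mul continuous_const)

end affineQuasiStabilizer

/-- For a nonzero locally finite Borel measure `η` on `ℝ`, the set
`𝒜(η) = {(s, t) : s ≠ 0, ∃ c > 0, (x ↦ s·x + t)_* η = c·η}` contains the identity `(1, 0)`,
is closed under composition `(s,t)·(s',t') = (s s', s t' + t)` and inversion
`(s,t)⁻¹ = (s⁻¹, −s⁻¹ t)` of the corresponding affine maps, and is a closed subset of
`(ℝ ∖ {0}) × ℝ`. -/
theorem affineQuasiStabilizer_subgroup_and_closed
    (η : Measure ℝ) [IsLocallyFiniteMeasure η] (hη : η ≠ 0) :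
    ((1, 0) : ℝ × ℝ) ∈ affineQuasiStabilizer η ∧
    (∀ p q : ℝ × ℝ, p ∈ affineQuasiStabilizer η → q ∈ affineQuasiStabilizer η →
      (p.1 * q.1, p.1 * q.2 + p.2) ∈ affineQuasiStabilizer η) ∧
    (∀ p : ℝ × ℝ, p ∈ affineQuasiStabilizer η →
      (p.1⁻¹, -(p.1⁻¹ * p.2)) ∈ affineQuasiStabilizer η) ∧
    IsClosed {q : {s : ℝ // s ≠ 0} × ℝ | ((q.1 : ℝ), q.2) ∈ affineQuasiStabilizer η} := by
  exact ⟨affineQuasiStabilizer.one_mem, fun _ _ => affineQuasiStabilizer.mul_mem,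
    fun _ => affineQuasiStabilizer.inv_mem, affineQuasiStabilizer.isClosed hη⟩
end
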